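/- arXiv:2201.00125 — 3 statements merged into one kernel-verified Lean document; each statement's English description precedes it below -/
import Mathlib

section
/- Let ({f_n}_n, {τ_n}_n) and ({g_n}_n, {ω_n}_n) be two p-orthonormal bases for a Banach space X. Then there exists an invertible isometry V : X → X such that V τ_n = ω_n and g_n = f_n ∘ V^{-1} for all n. -/
/-- A p-orthonormal basis for a Banach space `X`: a pair of sequences
`f : ℕ → X*` and `τ : ℕ → X` such that `τ` is a Schauder basis with coordinate
functionals `f` (every `x` has the expansion `x = ∑ f n x • τ n`), the
biorthogonality `f n (τ m) = δ_{n,m}` holds, `‖x‖^p = ∑' n, |f n x|^p` for all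
`x`, and for every `(a_n) ∈ ℓ^p(ℕ)` the series `∑ a_n τ_n` converges with
`‖∑ a_n τ_n‖^p = ∑ |a_n|^p`. -/
def IsPOrthonormalBasis {X : Type*} [NormedAddCommGroup X] [NormedSpace ℝ X]
    (p : ℝ) (f : ℕ → X →L[ℝ] ℝ) (τ : ℕ → X) : Prop :=
  (∀ x : X, HasSum (fun n => f n x • τ n) x) ∧
  (∀ n m : ℕ, f n (τ m) = if n = m then (1 : ℝ) else 0) ∧
  (∀ x : X, ∑' n : ℕ, |f n x| ^ p = ‖x‖ ^ p) ∧
  (∀ a : ℕ → ℝ, Summable (fun n => |a n| ^ p) →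
    ∃ s : X, HasSum (fun n => a n • τ n) s ∧ ‖s‖ ^ p = ∑' n : ℕ, |a n| ^ p)


theorem exists_isometry_of_pOrthonormalBases'
    {X : Type*} [NormedAddCommGroup X] [NormedSpace ℝ X] [CompleteSpace X]
    (p : ℝ) (hp : 1 ≤ p) (f : ℕ → X →L[ℝ] ℝ) (τ : ℕ → X)
    (g : ℕ → X →L[ℝ] ℝ) (ω : ℕ → X)
    (hf1 : ∀ x : X, HasSum (fun n => f n x • τ n) x)
    (hf2 : ∀ n m : ℕ, f n (τ m) = if n = m then (1 : ℝ) else 0)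
    (hf3 : ∀ x : X, ∑' n : ℕ, |f n x| ^ p = ‖x‖ ^ p)
    (hf4 : ∀ a : ℕ → ℝ, Summable (fun n => |a n| ^ p) →
      ∃ s : X, HasSum (fun n => a n • τ n) s ∧ ‖s‖ ^ p = ∑' n : ℕ, |a n| ^ p)
    (hg1 : ∀ x : X, HasSum (fun n => g n x • ω n) x)
    (hg2 : ∀ n m : ℕ, g n (ω m) = if n = m then (1 : ℝ) else 0)
    (hg3 : ∀ x : X, ∑' n : ℕ, |g n x| ^ p = ‖x‖ ^ p)
    (hg4 : ∀ a : ℕ → ℝ, Summable (fun n => |a n| ^ p) →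
      ∃ s : X, HasSum (fun n => a n • ω n) s ∧ ‖s‖ ^ p = ∑' n : ℕ, |a n| ^ p) :
    ∃ V : X ≃ₗᵢ[ℝ] X, (∀ n : ℕ, V (τ n) = ω n) ∧
      (∀ n : ℕ, g n = (f n).comp (V.symm.toContinuousLinearEquiv :
        X ≃L[ℝ] X).toContinuousLinearMap) := by
  have hp0 : p ≠ 0 := by linarith
  -- summability of coefficient sequences
  have summ : ∀ (h : ℕ → X →L[ℝ] ℝ), (∀ x : X, ∑' n : ℕ, |h n x| ^ p = ‖x‖ ^ p) →
      ∀ x : X, Summable (fun n => |h n x| ^ p) := by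
    intro h h3 x
    rcases eq_or_ne x 0 with rfl | hx
    · have : (fun n => |h n (0 : X)| ^ p) = fun _ => (0 : ℝ) := by
        funext n; simp [Real.zero_rpow hp0]
      rw [this]; exact summable_zero
    · by_contra hs
      have h0 := tsum_eq_zero_of_not_summable hs
      rw [h3 x] at h0
      have : (0 : ℝ) < ‖x‖ ^ p := Real.rpow_pos_of_pos (norm_pos_iff.mpr hx) p
      linarith
  -- the candidate maps
  set V0 : X → X := fun x => ∑' n, f n x • ω n with hV0
  set W0 : X → X := fun x => ∑' n, g n x • τ n with hW0
  have hV : ∀ x, HasSum (fun n => f n x • ω n) (V0 x) ∧ ‖V0 x‖ ^ p = ‖x‖ ^ p := by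
    intro x
    obtain ⟨s, hs, hns⟩ := hg4 (fun n => f n x) (summ f hf3 x)
    have hts : V0 x = s := hs.tsum_eq
    rw [hts]
    exact ⟨hs, by rw [hns, hf3]⟩
  have hW : ∀ x, HasSum (fun n => g n x • τ n) (W0 x) ∧ ‖W0 x‖ ^ p = ‖x‖ ^ p := by
    intro x
    obtain ⟨s, hs, hns⟩ := hf4 (fun n => g n x) (summ g hg3 x)
    have hts : W0 x = s := hs.tsum_eq
    rw [hts]
    exact ⟨hs, by rw [hns, hg3]⟩
  -- coefficients of images
  have hgV : ∀ n x, g n (V0 x) = f n x := by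
    intro n x
    have h1 : HasSum (fun m => g n (f m x • ω m)) (g n (V0 x)) := (g n).hasSum (hV x).1
    have h2 : (fun m => g n (f m x • ω m)) = fun m => if m = n then f n x else 0 := by
      funext m
      rw [map_smul, hg2 n m, smul_eq_mul]
      rcases eq_or_ne m n with hmn | hmn
      · simp [hmn]
      · simp [hmn, hmn.symm]
    rw [h2] at h1
    exact h1.unique (hasSum_ite_eq n (f n x))
  have hfW : ∀ n x, f n (W0 x) = g n x := by
    intro n x
    have h1 : HasSum (fun m => f n (g m x • τ m)) (f n (W0 x)) := (f n).hasSum (hW x).1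
    have h2 : (fun m => f n (g m x • τ m)) = fun m => if m = n then g n x else 0 := by
      funext m
      rw [map_smul, hf2 n m, smul_eq_mul]
      rcases eq_or_ne m n with hmn | hmn
      · simp [hmn]
      · simp [hmn, hmn.symm]
    rw [h2] at h1
    exact h1.unique (hasSum_ite_eq n (g n x))
  -- inverse identities
  have hWV : ∀ x, W0 (V0 x) = x := by
    intro x
    have h1 := (hW (V0 x)).1
    have h2 : (fun n => g n (V0 x) • τ n) = fun n => f n x • τ n := by
      funext n; rw [hgV n x]
    rw [h2] at h1
    exact h1.unique (hf1 x)
  have hVW : ∀ x, V0 (W0 x) = x := by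
    intro x
    have h1 := (hV (W0 x)).1
    have h2 : (fun n => f n (W0 x) • ω n) = fun n => g n x • ω n := by
      funext n; rw [hfW n x]
    rw [h2] at h1
    exact h1.unique (hg1 x)
  -- linearity
  have hadd : ∀ x y, V0 (x + y) = V0 x + V0 y := by
    intro x y
    have h1 := (hV x).1.add (hV y).1
    have h2 : (fun n => f n x • ω n + f n y • ω n) = fun n => f n (x + y) • ω n := by
      funext n; rw [map_add, add_smul]
    rw [h2] at h1
    exact ((hV (x + y)).1.unique h1).symm ▸ rfl
  have hsmul : ∀ (c : ℝ) x, V0 (c • x) = c • V0 x := by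
    intro c x
    have h1 := (hV x).1.const_smul c
    have h2 : (fun n => c • (f n x • ω n)) = fun n => f n (c • x) • ω n := by
      funext n; rw [map_smul, smul_smul, smul_eq_mul]
    rw [h2] at h1
    exact (hV (c • x)).1.unique h1
  have hadd' : ∀ x y, V0 (x + y) = V0 x + V0 y := hadd
  let e : X ≃ₗ[ℝ] X :=
    { toFun := V0
      invFun := W0
      map_add' := hadd
      map_smul' := hsmul
      left_inv := hWV
      right_inv := hVW }
  have hnorm : ∀ x, ‖e x‖ = ‖x‖ := by
    intro x
    exact Real.rpow_left_injOn hp0 (norm_nonneg _) (norm_nonneg _) (hV x).2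
  refine ⟨⟨e, hnorm⟩, ?_, ?_⟩
  · intro n
    have h1 := (hV (τ n)).1
    have h2 : (fun m => f m (τ n) • ω m) = fun m => if m = n then ω n else 0 := by
      funext m
      rw [hf2 m n]
      by_cases hmn : m = n <;> simp [hmn]
    rw [h2] at h1
    exact h1.unique (hasSum_ite_eq n (ω n))
  · intro n
    ext x
    have : ((⟨e, hnorm⟩ : X ≃ₗᵢ[ℝ] X).symm x : X) = W0 x := rfl
    simp only [ContinuousLinearMap.comp_apply]
    rw [show ((((⟨e, hnorm⟩ : X ≃ₗᵢ[ℝ] X).symm.toContinuousLinearEquiv :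
        X ≃L[ℝ] X).toContinuousLinearMap) x) = W0 x from rfl]
    exact (hfW n x).symm


theorem exists_isometry_of_pOrthonormalBases
    {X : Type*} [NormedAddCommGroup X] [NormedSpace ℝ X] [CompleteSpace X]
    (p : ℝ) (hp : 1 ≤ p) (f : ℕ → X →L[ℝ] ℝ) (τ : ℕ → X)
    (g : ℕ → X →L[ℝ] ℝ) (ω : ℕ → X)
    (hfτ : IsPOrthonormalBasis p f τ) (hgω : IsPOrthonormalBasis p g ω) :
    ∃ V : X ≃ₗᵢ[ℝ] X, (∀ n : ℕ, V (τ n) = ω n) ∧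
      (∀ n : ℕ, g n = (f n).comp (V.symm.toContinuousLinearEquiv :
        X ≃L[ℝ] X).toContinuousLinearMap) := by
  obtain ⟨hf1, hf2, hf3, hf4⟩ := hfτ
  obtain ⟨hg1, hg2, hg3, hg4⟩ := hgω
  exact exists_isometry_of_pOrthonormalBases' p hp f τ g ω
    hf1 hf2 hf3 hf4 hg1 hg2 hg3 hg4
end

section
/- If ({f_n}_n, {τ_n}_n) is a p-approximate Riesz basis for a Banach space X, witnessed by invertible operators U, V with f_n = g_n U and τ_n = V ω_n for a p-orthonormal basis ({g_n}, {ω_n}), then ({f_n}_n, {τ_n}_n) is a p-approximate Schauder frame for X with frame operator S_{f,τ} = V U, and moreover θ_f S_{f,τ}^{-1} θ_τ = I on ℓ^p(ℕ). -/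
open scoped ENNReal

theorem pApproximateRieszBasis_frameOperator_and_reproducing
    {X : Type*} [NormedAddCommGroup X] [NormedSpace ℝ X] [CompleteSpace X]
    (q : ℝ≥0∞) [Fact (1 ≤ q)] (hq : q ≠ ⊤)
    (g : ℕ → X →L[ℝ] ℝ) (ω : ℕ → X)
    (h : IsPOrthonormalBasis q.toReal g ω)
    (U V : X ≃L[ℝ] X)
    (f : ℕ → X →L[ℝ] ℝ) (τ : ℕ → X)
    (hf : ∀ n : ℕ, f n = (g n).comp (U : X →L[ℝ] X))
    (hτ : ∀ n : ℕ, τ n = V (ω n))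
    (θf : X →L[ℝ] lp (fun _ : ℕ => ℝ) q)
    (hθf : ∀ (x : X) (n : ℕ), θf x n = f n x)
    (θτ : lp (fun _ : ℕ => ℝ) q →L[ℝ] X)
    (hθτ : ∀ a : lp (fun _ : ℕ => ℝ) q, HasSum (fun n => a n • τ n) (θτ a)) :
    θτ.comp θf = ((V : X →L[ℝ] X).comp (U : X →L[ℝ] X)) ∧
      (∀ a : lp (fun _ : ℕ => ℝ) q, θf ((U.trans V).symm (θτ a)) = a) := by
  constructor
  · ext x
    have h1 : HasSum (fun n => g n (U x) • ω n) (U x) := h.1 (U x)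
    have h2 : HasSum (fun n => g n (U x) • V (ω n)) (V (U x)) := by
      have := (V : X →L[ℝ] X).hasSum h1
      simpa using this
    have h3 : HasSum (fun n => (θf x n) • τ n) (θτ (θf x)) := hθτ (θf x)
    have h4 : HasSum (fun n => g n (U x) • V (ω n)) (θτ (θf x)) := by
      convert h3 using 2 with n
      rw [hθf, hf, hτ]
      rfl
    simpa using h4.unique h2
  · intro a
    set y := (U.trans V).symm (θτ a) with hy
    have hUy : U y = V.symm (θτ a) := by
      have h0 : (U.trans V) y = θτ a := (U.trans V).apply_symm_apply _
      have h0' : V (U y) = θτ a := h0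
      exact (V.symm_apply_eq.mpr h0'.symm).symm
    have hsum : HasSum (fun n => a n • ω n) (V.symm (θτ a)) := by
      have h5 := (V.symm : X →L[ℝ] X).hasSum (hθτ a)
      simpa [hτ] using h5
    refine lp.ext (funext fun m => ?_)
    have h6 : HasSum (fun n => a n • g m (ω n)) (g m (V.symm (θτ a))) := by
      have := (g m).hasSum hsum
      simpa using this
    have h7 : HasSum (fun n => if n = m then a m else 0) (g m (V.symm (θτ a))) := by
      convert h6 using 1
      funext n
      rw [h.2.1]
      by_cases hnm : n = m
      · simp [hnm]
      · simp [hnm, Ne.symm hnm]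
    have h8 : g m (V.symm (θτ a)) = a m := h7.unique (hasSum_ite_eq m (a m))
    rw [hθf, hf]
    simpa [hUy] using h8
end

section
/- Let X be a Banach space admitting a p-orthonormal basis ({g_n}, {ω_n}), and let ({f_n}_n, {τ_n}_n) be a p-approximate Schauder frame for X satisfying θ_f S_{f,τ}^{-1} θ_τ = I on ℓ^p(ℕ). Then the operators U := θ_ω θ_f and V := θ_τ θ_g are bounded invertible, and satisfy g_n ∘ U = f_n and V ω_n = τ_n for all n; hence ({f_n}, {τ_n}) is a p-approximate Riesz basis for X. -/
open scoped ENNReal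

theorem pApproximateRieszBasis_of_reproducing
    {X : Type*} [NormedAddCommGroup X] [NormedSpace ℝ X] [CompleteSpace X]
    (q : ℝ≥0∞) [Fact (1 ≤ q)] (hq : q ≠ ⊤)
    (g : ℕ → X →L[ℝ] ℝ) (ω : ℕ → X)
    (h : IsPOrthonormalBasis q.toReal g ω)
    (θg : X →L[ℝ] lp (fun _ : ℕ => ℝ) q)
    (hθg : ∀ (x : X) (n : ℕ), θg x n = g n x)
    (θω : lp (fun _ : ℕ => ℝ) q →L[ℝ] X)
    (hθω : ∀ a : lp (fun _ : ℕ => ℝ) q, HasSum (fun n => a n • ω n) (θω a))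
    (f : ℕ → X →L[ℝ] ℝ) (τ : ℕ → X)
    (θf : X →L[ℝ] lp (fun _ : ℕ => ℝ) q)
    (hθf : ∀ (x : X) (n : ℕ), θf x n = f n x)
    (θτ : lp (fun _ : ℕ => ℝ) q →L[ℝ] X)
    (hθτ : ∀ a : lp (fun _ : ℕ => ℝ) q, HasSum (fun n => a n • τ n) (θτ a))
    (S : X ≃L[ℝ] X) (hS : (S : X →L[ℝ] X) = θτ.comp θf)
    (hrepr : ∀ a : lp (fun _ : ℕ => ℝ) q, θf (S.symm (θτ a)) = a) :
    ∃ U' V' : X ≃L[ℝ] X,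
      (U' : X →L[ℝ] X) = θω.comp θf ∧
      (V' : X →L[ℝ] X) = θτ.comp θg ∧
      (∀ (n : ℕ) (x : X), g n (U' x) = f n x) ∧
      (∀ n : ℕ, V' (ω n) = τ n) := by
    -- θg ∘ θω = id
  have hgω : ∀ a : lp (fun _ : ℕ => ℝ) q, θg (θω a) = a := by
    intro a
    apply lp.ext
    funext n
    rw [hθg]
    have h1 : HasSum (fun m => g n (a m • ω m)) (g n (θω a)) :=
      (g n).hasSum (hθω a)
    have h2 : HasSum (fun m => g n (a m • ω m)) (a n) := by
      have : (fun m => g n (a m • ω m)) = fun m => if m = n then a n else 0 := by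
        funext m
        rw [map_smul, h.2.1 n m]
        by_cases hmn : n = m
        · subst hmn; simp
        · simp [hmn, Ne.symm hmn]
      rw [this]
      exact hasSum_ite_eq n (a n)
    exact h1.unique h2
  -- θω ∘ θg = id
  have hωg : ∀ x : X, θω (θg x) = x := by
    intro x
    have h1 : HasSum (fun m => (θg x) m • ω m) (θω (θg x)) := hθω (θg x)
    have h2 : HasSum (fun m => (θg x) m • ω m) x := by
      have : (fun m => (θg x) m • ω m) = fun m => g m x • ω m := by
        funext m; rw [hθg]
      rw [this]; exact h.1 x
    exact h1.unique h2
  -- θτ ∘ θf = S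
  have hτf : ∀ x : X, θτ (θf x) = S x := by
    intro x
    have := ContinuousLinearMap.ext_iff.mp hS x
    simpa using this.symm
  refine ⟨ContinuousLinearEquiv.equivOfInverse (θω.comp θf)
      (((S.symm : X →L[ℝ] X).comp θτ).comp θg) ?_ ?_,
    ContinuousLinearEquiv.equivOfInverse (θτ.comp θg)
      ((θω.comp θf).comp (S.symm : X →L[ℝ] X)) ?_ ?_, rfl, rfl, ?_, ?_⟩
  · intro x
    simp only [ContinuousLinearMap.comp_apply, ContinuousLinearMap.coe_coe, ContinuousLinearEquiv.coe_coe]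
    rw [hgω, hτf]
    exact S.symm_apply_apply x
  · intro y
    simp only [ContinuousLinearMap.comp_apply, ContinuousLinearMap.coe_coe, ContinuousLinearEquiv.coe_coe]
    rw [hrepr, hωg]
  · intro x
    simp only [ContinuousLinearMap.comp_apply, ContinuousLinearMap.coe_coe, ContinuousLinearEquiv.coe_coe]
    rw [hrepr, hωg]
  · intro y
    simp only [ContinuousLinearMap.comp_apply, ContinuousLinearMap.coe_coe, ContinuousLinearEquiv.coe_coe]
    rw [hgω, hτf]
    exact S.apply_symm_apply y
  · intro n x
    simp only [ContinuousLinearEquiv.equivOfInverse_apply, ContinuousLinearMap.comp_apply]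
    rw [← hθg, hgω, hθf]
  · intro n
    simp only [ContinuousLinearEquiv.equivOfInverse_apply, ContinuousLinearMap.comp_apply]
    have h1 : HasSum (fun m => (θg (ω n)) m • τ m) (θτ (θg (ω n))) := hθτ (θg (ω n))
    have h2 : HasSum (fun m => (θg (ω n)) m • τ m) (τ n) := by
      have : (fun m => (θg (ω n)) m • τ m) = fun m => if m = n then τ n else 0 := by
        funext m
        rw [hθg, h.2.1 m n]
        by_cases hmn : m = n
        · subst hmn; simp
        · simp [hmn]
      rw [this]
      exact hasSum_ite_eq n (τ n)
    exact h1.unique h2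
end
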